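/- Let A be a trigonometric ∨-system of four pairwise non-collinear covectors α, β, γ, δ on ℂ² with nonzero multiplicities, which is irreducible. Then, after possibly replacing some covectors by their negatives and renaming, there is a covector α ∈ A such that the other three covectors all lie in a single α-series; moreover in a suitable basis the four covectors are e¹, e², e¹+e², e¹−e². -/

import Mathlib

open scoped BigOperators

noncomputable section

abbrev V (n : ℕ) := Fin n → ℂ
abbrev D (n : ℕ) := Module.Dual ℂ (V n)

/-- Wedge of two covectors: `(α∧β)(a,b) = α(a)β(b) − α(b)β(a)`. -/
def wedge {n : ℕ} (α β : D n) (a b : V n) : ℂ := α a * β b - α b * β a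

/-- `β` is parallel (collinear) to `α`. -/
def Parallel {n : ℕ} (α β : D n) : Prop := ∃ t : ℂ, β = t • α

/-- Two covectors belong to a common `α`-series: their difference or sum is an
integer multiple of `α`. -/
def SameSer {n : ℕ} (α γ₁ γ₂ : D n) : Prop :=
  ∃ m : ℤ, γ₁ - γ₂ = (m : ℂ) • α ∨ γ₁ + γ₂ = (m : ℂ) • α

/-- `Γ` is a (maximal) `α`-series of the system `A`. -/
def IsSeries {n : ℕ} (A : Finset (D n)) (α : D n) (Γ : Finset (D n)) : Prop :=
  Γ ⊆ A ∧ (∀ β ∈ Γ, ¬ Parallel α β) ∧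
    (∀ γ₁ ∈ Γ, ∀ γ₂ ∈ Γ, SameSer α γ₁ γ₂) ∧
    (∀ β ∈ A, ¬ Parallel α β → (∃ γ ∈ Γ, SameSer α β γ) → β ∈ Γ)

/-- The trigonometric ∨-system series conditions:
for every `α ∈ A` and every `α`-series `Γ`, `Σ_{β∈Γ} c_β (α,β) α∧β = 0`. -/
def SeriesCond {n : ℕ} (A : Finset (D n)) (c : D n → ℂ) (ip : D n → D n → ℂ) : Prop :=
  ∀ α ∈ A, ∀ Γ : Finset (D n), IsSeries A α Γ →
    ∀ a b : V n, ∑ β ∈ Γ, c β * ip α β * wedge α β a b = 0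

/-- The bilinear form `G(u,v) = Σ_{α∈A} c_α α(u) α(v)`. -/
def Gform {n : ℕ} (A : Finset (D n)) (c : D n → ℂ) (u v : V n) : ℂ :=
  ∑ α ∈ A, c α * α u * α v

/-- Non-degeneracy of a bilinear form on `ℂⁿ`. -/
def NonDeg {n : ℕ} (B : V n → V n → ℂ) : Prop :=
  ∀ u : V n, (∀ v : V n, B u v = 0) → u = 0

/-- All covectors of `A` lie in an `n`-dimensional lattice. -/
def InLattice {n : ℕ} (A : Finset (D n)) : Prop :=
  ∃ f : Fin n → D n, LinearIndependent ℂ f ∧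
    ∀ β ∈ A, ∃ m : Fin n → ℤ, β = ∑ i, (m i : ℂ) • f i

/-- The `i`-th coordinate covector. -/
def coD {n : ℕ} (i : Fin n) : D n := LinearMap.proj i

/-- Partial derivative in the `i`-th coordinate direction. -/
def pd {n : ℕ} (i : Fin n) (f : V n → ℂ) (x : V n) : ℂ := fderiv ℂ f x (Pi.single i 1)

/-- Irreducibility: `A` does not split as a direct sum of two lower-dimensional systems. -/
def Irred {n : ℕ} (A : Finset (D n)) : Prop :=
  ¬ ∃ U₁ U₂ : Submodule ℂ (D n), U₁ ⊓ U₂ = ⊥ ∧ (∀ β ∈ A, β ∈ U₁ ∨ β ∈ U₂) ∧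
    (∃ β ∈ A, β ∉ U₁) ∧ (∃ β ∈ A, β ∉ U₂)


/-!
Let `(α, β) = α (vee β)`. If `β` is alone in its `α`-series, the series condition for that
series reads `c_β (α, β) α ∧ β = 0`, so `(α, β) = 0`; and a nonzero covector is orthogonal to at
most one element of `A`, because two independent covectors cannot both vanish on the vector
`vee α`. Hence for each `α ∈ A` the other three covectors form a single `α`-series, or a pair in
one series plus a lone orthogonal partner.

If no covector had the first property, orthogonality would split `A` into pairs `{w, b}`,
`{u, v}` with `u ≡ ±v` modulo both `w` and `b`, and `w ≡ ±b` modulo `u`. Comparing coefficients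
in the basis `w, b` gives `k m = 2` for the integers `w ∓ b = k u`, `u ∓ v = m w`, so `k` or `m`
is a unit, which puts `b` into the `w`-series of `u` or `v` into the `u`-series of `w`, although
`b` and `v` are alone in these series.

So some `w` carries all others in one series: they are `±(x - a w)` for three distinct integer
levels `a`. The dichotomy at each of them says that its level is adjacent to another one or is
the midpoint of the other two, so the levels are `n - 1, n, n + 1`, and with `f = w`,
`g = x - n w` the covectors are `±f, ±(f + g), ±g, ±(f - g)`.
-/

open Finset

section SameSer

variable {n : ℕ} {α β γ δ : D n}

theorem SameSer.refl (α β : D n) : SameSer α β β := ⟨0, Or.inl (by simp)⟩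

theorem SameSer.symm (h : SameSer α β γ) : SameSer α γ β := by
  obtain ⟨m, h | h⟩ := h
  · exact ⟨-m, Or.inl (by rw [Int.cast_neg, neg_smul, ← h, neg_sub])⟩
  · exact ⟨m, Or.inr (by rw [add_comm, h])⟩

theorem SameSer.trans (h₁ : SameSer α β γ) (h₂ : SameSer α γ δ) : SameSer α β δ := by
  obtain ⟨m, h₁ | h₁⟩ := h₁ <;> obtain ⟨k, h₂ | h₂⟩ := h₂
  · exact ⟨m + k, Or.inl (by rw [Int.cast_add, add_smul, ← h₁, ← h₂]; abel)⟩
  · exact ⟨m + k, Or.inr (by rw [Int.cast_add, add_smul, ← h₁, ← h₂]; abel)⟩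
  · exact ⟨m - k, Or.inr (by rw [Int.cast_sub, sub_smul, ← h₁, ← h₂]; abel)⟩
  · exact ⟨m - k, Or.inl (by rw [Int.cast_sub, sub_smul, ← h₁, ← h₂]; abel)⟩

@[simp] theorem sameSer_neg_left : SameSer (-α) β γ ↔ SameSer α β γ := by
  refine ⟨fun ⟨m, h⟩ => ⟨-m, ?_⟩, fun ⟨m, h⟩ => ⟨-m, ?_⟩⟩ <;> simpa using h

@[simp] theorem sameSer_neg_mid : SameSer α (-β) γ ↔ SameSer α β γ := by
  refine ⟨fun ⟨m, h⟩ => ⟨-m, ?_⟩, fun ⟨m, h⟩ => ⟨-m, ?_⟩⟩ <;>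
    rcases h with h | h <;> [right; left; right; left] <;>
    linear_combination (norm := module) -h

@[simp] theorem sameSer_neg_right : SameSer α β (-γ) ↔ SameSer α β γ := by
  simp only [SameSer, sub_neg_eq_add, ← sub_eq_add_neg, or_comm]

theorem SameSer.exists_eq (h : SameSer α β γ) :
    ∃ m : ℤ, γ = β - (m : ℂ) • α ∨ γ = -(β - (m : ℂ) • α) := by
  obtain ⟨m, h | h⟩ := h
  · exact ⟨m, Or.inl (by rw [← h, sub_sub_cancel])⟩
  · exact ⟨m, Or.inr (by rw [← h]; abel)⟩

theorem sameSer_of_sub_eq_smul {m : ℤ} (h : β - γ = (m : ℂ) • α) (hm : IsUnit m) :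
    SameSer β γ α := by
  rcases Int.isUnit_iff.1 hm with rfl | rfl
  · exact ⟨1, Or.inr (by linear_combination (norm := module) -h)⟩
  · exact ⟨1, Or.inl (by linear_combination (norm := module) -h)⟩

end SameSer

section Exchange

variable {n : ℕ} {w b u v : D n}

theorem sameSer_or_sameSer_of_sub_eq (hwb : LinearIndependent ℂ ![w, b])
    (huv : LinearIndependent ℂ ![u, v]) {m k : ℤ} (h₁ : u - v = (m : ℂ) • w)
    (h₂ : SameSer b u v) (h₃ : w - b = (k : ℂ) • u) : SameSer w u b ∨ SameSer u v w := by
  obtain ⟨m', h₂ | h₂⟩ := h₂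
  · obtain ⟨hm, -⟩ := hwb.eq_zero_of_pair' (s := (m : ℂ)) (t := (m' : ℂ)) (by rw [← h₁, ← h₂])
    rw [hm, zero_smul, sub_eq_zero] at h₁
    exact absurd h₁ (by simpa using huv.injective.ne zero_ne_one)
  · obtain ⟨hkm, -⟩ := hwb.eq_of_pair (s := 2) (t := -2) (s' := k * m) (t' := k * m')
      (by linear_combination (norm := module) (2 : ℂ) • h₃ + (k : ℂ) • h₁ + (k : ℂ) • h₂)
    rcases Int.prime_two.irreducible.isUnit_or_isUnit (by exact_mod_cast hkm) with hk | hm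
    · exact Or.inl (sameSer_of_sub_eq_smul h₃ hk).symm
    · exact Or.inr (sameSer_of_sub_eq_smul h₁ hm)

theorem SameSer.sameSer_or_sameSer (hwb : LinearIndependent ℂ ![w, b])
    (huv : LinearIndependent ℂ ![u, v]) (h₁ : SameSer w u v) (h₂ : SameSer b u v)
    (h₃ : SameSer u w b) : SameSer w u b ∨ SameSer u v w := by
  obtain ⟨m, hv⟩ := h₁.exists_eq
  obtain ⟨k, hb⟩ := h₃.exists_eq
  have key := sameSer_or_sameSer_of_sub_eq (w := w) (u := u)
    (v := u - (m : ℂ) • w) (b := w - (k : ℂ) • u) (m := m) (k := k)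
  rcases hv with rfl | rfl <;> rcases hb with rfl | rfl <;>
    (try simp only [sameSer_neg_left, sameSer_neg_mid, sameSer_neg_right,
      LinearIndependent.pair_neg_right_iff] at *) <;>
    exact key hwb huv (sub_sub_cancel _ _) h₂ (sub_sub_cancel _ _)

end Exchange

section Levels

variable {n : ℕ} {w x : D n}

theorem SameSer.level_sub_eq_one (h : LinearIndependent ℂ ![w, x]) {a b : ℤ}
    (hs : SameSer (x - (a : ℂ) • w) w (x - (b : ℂ) • w)) : a - b = 1 ∨ b - a = 1 := by
  obtain ⟨m, hs | hs⟩ := hs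
  · obtain ⟨h₁, h₂⟩ := h.eq_of_pair (s := 1 + b) (t := -1) (s' := -(m * a)) (t' := m)
      (by linear_combination (norm := module) hs)
    left; exact_mod_cast (by linear_combination -h₁ - (a : ℂ) * h₂ : (a : ℂ) - b = 1)
  · obtain ⟨h₁, h₂⟩ := h.eq_of_pair (s := 1 - b) (t := 1) (s' := -(m * a)) (t' := m)
      (by linear_combination (norm := module) hs)
    right; exact_mod_cast (by linear_combination -h₁ - (a : ℂ) * h₂ : (b : ℂ) - a = 1)

theorem SameSer.levels_eq_or_add_eq (h : LinearIndependent ℂ ![w, x]) {a b c : ℤ}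
    (hs : SameSer (x - (a : ℂ) • w) (x - (b : ℂ) • w) (x - (c : ℂ) • w)) :
    b = c ∨ b + c = 2 * a := by
  obtain ⟨m, hs | hs⟩ := hs
  · obtain ⟨h₁, h₂⟩ := h.eq_of_pair (s := c - b) (t := 0) (s' := -(m * a)) (t' := m)
      (by linear_combination (norm := module) hs)
    left; exact_mod_cast (by linear_combination -h₁ - (a : ℂ) * h₂ : (b : ℂ) = c)
  · obtain ⟨h₁, h₂⟩ := h.eq_of_pair (s := -b - c) (t := 2) (s' := -(m * a)) (t' := m)
      (by linear_combination (norm := module) hs)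
    right; exact_mod_cast (by linear_combination -h₁ - (a : ℂ) * h₂ : (b : ℂ) + c = 2 * a)

theorem level_ne {u u' : D n} {a b : ℤ} (h : LinearIndependent ℂ ![u, u'])
    (hu : u = x - (a : ℂ) • w ∨ u = -(x - (a : ℂ) • w))
    (hu' : u' = x - (b : ℂ) • w ∨ u' = -(x - (b : ℂ) • w)) : a ≠ b := by
  rintro rfl
  rcases hu with rfl | rfl <;> rcases hu' with rfl | rfl <;>
    (try simp only [LinearIndependent.pair_neg_left_iff,
      LinearIndependent.pair_neg_right_iff] at h) <;>
    exact h.injective.ne zero_ne_one rfl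

end Levels

section Plane

variable {α β : D 2}

theorem eq_zero_of_apply_eq_zero (h : LinearIndependent ℂ ![α, β]) {v : V 2} (hα : α v = 0)
    (hβ : β v = 0) : v = 0 := by
  have hspan := h.span_eq_top_of_card_eq_finrank (by simp [Subspace.dual_finrank_eq])
  refine (Module.forall_dual_apply_eq_zero_iff ℂ v).1 fun φ => ?_
  obtain ⟨c, rfl⟩ :=
    (Submodule.mem_span_range_iff_exists_fun ℂ).1 (hspan ▸ Submodule.mem_top (x := φ))
  simp [Fin.sum_univ_two, hα, hβ]

theorem LinearIndependent.exists_dual_pair (h : LinearIndependent ℂ ![α, β]) :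
    ∃ a b : V 2, α a = 1 ∧ β a = 0 ∧ α b = 0 ∧ β b = 1 := by
  have hinj : Function.Injective (LinearMap.pi ![α, β]) := by
    refine (injective_iff_map_eq_zero _).2 fun v hv => eq_zero_of_apply_eq_zero h ?_ ?_
    · simpa using congrFun hv 0
    · simpa using congrFun hv 1
  obtain ⟨a, ha⟩ := LinearMap.injective_iff_surjective.1 hinj (Pi.single 0 1)
  obtain ⟨b, hb⟩ := LinearMap.injective_iff_surjective.1 hinj (Pi.single 1 1)
  exact ⟨a, b, by simpa using congrFun ha 0, by simpa using congrFun ha 1,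
    by simpa using congrFun hb 0, by simpa using congrFun hb 1⟩

end Plane

theorem Finset.exists_fourth {M : Type*} [DecidableEq M] {A : Finset M} (hA : A.card = 4)
    {a b c : M} (ha : a ∈ A) (hb : b ∈ A) (hc : c ∈ A) (hab : a ≠ b) (hac : a ≠ c)
    (hbc : b ≠ c) :
    ∃ d ∈ A, d ≠ a ∧ d ≠ b ∧ d ≠ c ∧ ∀ x ∈ A, x = a ∨ x = b ∨ x = c ∨ x = d := by
  have hsub : {a, b, c} ⊆ A := by simp [insert_subset_iff, ha, hb, hc]
  obtain ⟨d, hd⟩ := card_eq_one.1 (by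
    rw [card_sdiff_of_subset hsub, hA, card_eq_three.2 ⟨a, b, c, hab, hac, hbc, rfl⟩] :
      (A \ {a, b, c}).card = 1)
  have hdA : ∀ x, x ∈ A ∧ x ∉ ({a, b, c} : Finset M) ↔ x = d := by
    simpa [Finset.ext_iff] using hd
  have := (hdA d).2 rfl
  simp only [mem_insert, mem_singleton, not_or] at this
  refine ⟨d, this.1, this.2.1, this.2.2.1, this.2.2.2, fun x hx => ?_⟩
  by_cases hx' : x ∈ ({a, b, c} : Finset M)
  · simp only [mem_insert, mem_singleton] at hx'; tauto
  · exact Or.inr (Or.inr (Or.inr ((hdA x).1 ⟨hx, hx'⟩)))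

def IsOneSeries {n : ℕ} (s : Set (D n)) (α : D n) : Prop :=
  ∀ β ∈ s, ∀ γ ∈ s, β ≠ α → γ ≠ α → SameSer α β γ

def IsSingletonSeries {n : ℕ} (A : Finset (D n)) (α β : D n) : Prop :=
  ∀ γ ∈ A, γ ≠ α → SameSer α γ β → γ = β

/-- `vee ξ` is the vector `G`-dual to `ξ`, so `α (vee β)` is the inner product `(α, β)`. -/
structure IsVeeSystem (A : Finset (D 2)) (c : D 2 → ℂ) (vee : D 2 → V 2) : Prop where
  indep : ∀ α ∈ A, ∀ β ∈ A, α ≠ β → LinearIndependent ℂ ![α, β]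
  mult_ne_zero : ∀ α ∈ A, c α ≠ 0
  vee_spec : ∀ ξ : D 2, ∀ v : V 2, Gform A c (vee ξ) v = ξ v
  series : SeriesCond A c (fun ξ η => ξ (vee η))

namespace IsVeeSystem

variable {A : Finset (D 2)} {c : D 2 → ℂ} {vee : D 2 → V 2} {α β γ : D 2}

theorem apply_vee_comm (hS : IsVeeSystem A c vee) (ξ η : D 2) : ξ (vee η) = η (vee ξ) := by
  rw [← hS.vee_spec ξ, ← hS.vee_spec η]
  exact sum_congr rfl fun _ _ => by ring

theorem ne_zero (hS : IsVeeSystem A c vee) (hα : α ∈ A) (hβ : β ∈ A) (hne : α ≠ β) :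
    α ≠ 0 := by
  simpa using (hS.indep α hα β hβ hne).ne_zero 0

theorem apply_vee_eq_zero_of_isSingletonSeries (hS : IsVeeSystem A c vee) (hα : α ∈ A)
    (hβ : β ∈ A) (hne : β ≠ α) (h : IsSingletonSeries A α β) : α (vee β) = 0 := by
  have hind := hS.indep α hα β hβ hne.symm
  have hser : IsSeries A α {β} := by
    refine ⟨singleton_subset_iff.2 hβ, ?_, by simp [SameSer.refl], ?_⟩
    · rintro _ h' ⟨t, rfl⟩
      exact (LinearIndependent.pair_iff' (hS.ne_zero hα hβ hne.symm)).1 hind t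
        (mem_singleton.1 h')
    · rintro γ hγ hpar ⟨_, h', hs⟩
      rw [mem_singleton] at h' ⊢
      subst h'
      exact h γ hγ (by rintro rfl; exact hpar ⟨1, (one_smul _ _).symm⟩) hs
  obtain ⟨a, b, hαa, hβa, hαb, hβb⟩ := hind.exists_dual_pair
  simpa [wedge, hαa, hβa, hαb, hβb, hS.mult_ne_zero β hβ] using hS.series α hα {β} hser a b

theorem eq_of_apply_vee_eq_zero (hS : IsVeeSystem A c vee) (hβ : β ∈ A) (hγ : γ ∈ A)
    (hα : α ≠ 0) (hαβ : α (vee β) = 0) (hαγ : α (vee γ) = 0) : β = γ := by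
  by_contra hne
  refine hα (LinearMap.ext fun v => ?_)
  rw [hS.apply_vee_comm] at hαβ hαγ
  rw [← hS.vee_spec α v, eq_zero_of_apply_eq_zero (hS.indep β hβ γ hγ hne) hαβ hαγ]
  simp [Gform]

theorem exists_sameSer (hS : IsVeeSystem A c vee) {x y z : D 2}
    (hA : ∀ β ∈ A, β = α ∨ β = x ∨ β = y ∨ β = z) (hα : α ∈ A) (hx : x ∈ A) (hy : y ∈ A)
    (hxα : x ≠ α) (hyα : y ≠ α) (hxy : x ≠ y) :
    SameSer α x y ∨ SameSer α x z ∨ SameSer α y z := by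
  by_contra! ⟨hxy', hxz, hyz⟩
  have hx₁ : IsSingletonSeries A α x := by
    intro γ hγ hγα hs
    rcases hA γ hγ with rfl | rfl | rfl | rfl
    exacts [absurd rfl hγα, rfl, absurd hs.symm hxy', absurd hs.symm hxz]
  have hy₁ : IsSingletonSeries A α y := by
    intro γ hγ hγα hs
    rcases hA γ hγ with rfl | rfl | rfl | rfl
    exacts [absurd rfl hγα, absurd hs hxy', rfl, absurd hs.symm hyz]
  exact hxy (hS.eq_of_apply_vee_eq_zero hx hy (hS.ne_zero hα hx hxα.symm)
    (hS.apply_vee_eq_zero_of_isSingletonSeries hα hx hxα hx₁)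
    (hS.apply_vee_eq_zero_of_isSingletonSeries hα hy hyα hy₁))

theorem exists_isSingletonSeries (hS : IsVeeSystem A c vee) (hcard : A.card = 4) (hα : α ∈ A)
    (h : ¬IsOneSeries A α) :
    ∃ β ∈ A, β ≠ α ∧ IsSingletonSeries A α β ∧ IsOneSeries (↑A \ {β}) α := by
  classical
  simp only [IsOneSeries, not_forall] at h
  obtain ⟨x, hx, y, hy, hxα, hyα, hxy⟩ := h
  have hxy' : x ≠ y := by rintro rfl; exact hxy (SameSer.refl _ _)
  obtain ⟨z, hz, hzα, hzx, hzy, hA⟩ := exists_fourth hcard hα hx hy hxα.symm hyα.symm hxy'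
  wlog hxz : SameSer α x z generalizing x y
  · have hyz := ((hS.exists_sameSer hA hα hx hy hxα hyα hxy').resolve_left hxy).resolve_left hxz
    exact this y hy x hx hyα hxα (fun h => hxy h.symm) hxy'.symm hzy hzx
      (fun γ hγ => by have := hA γ hγ; tauto) hyz
  refine ⟨y, hy, hyα, fun γ hγ hγα hs => ?_, fun γ hγ δ hδ hγα hδα => ?_⟩
  · rcases hA γ hγ with rfl | rfl | rfl | rfl
    exacts [absurd rfl hγα, absurd hs hxy, rfl, absurd (hxz.trans hs) hxy]
  · simp only [Set.mem_sdiff, mem_coe, Set.mem_singleton_iff] at hγ hδ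
    rcases hA γ hγ.1 with rfl | rfl | rfl | rfl <;> rcases hA δ hδ.1 with rfl | rfl | rfl | rfl <;>
      first | exact SameSer.refl _ _ | exact hxz | exact hxz.symm | simp_all

theorem exists_isOneSeries (hS : IsVeeSystem A c vee) (hcard : A.card = 4) :
    ∃ α ∈ A, IsOneSeries A α := by
  classical
  by_contra! h
  have partner := fun α (hα : α ∈ A) => hS.exists_isSingletonSeries hcard hα (h α hα)
  have orth {α β : D 2} (hα : α ∈ A) (hβ : β ∈ A) (hne : β ≠ α)
      (hs : IsSingletonSeries A α β) : β (vee α) = 0 := by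
    rw [hS.apply_vee_comm]; exact hS.apply_vee_eq_zero_of_isSingletonSeries hα hβ hne hs
  obtain ⟨w, hw⟩ : A.Nonempty := card_pos.1 (by omega)
  obtain ⟨b, hb, hbw, hwb, hw₂⟩ := partner w hw
  obtain ⟨b', hb', hb'b, hbb', hb₂⟩ := partner b hb
  obtain rfl : b' = w := hS.eq_of_apply_vee_eq_zero hb' hw (hS.ne_zero hb hw hbw)
    (hS.apply_vee_eq_zero_of_isSingletonSeries hb hb' hb'b hbb') (orth hw hb hbw hwb)
  obtain ⟨u, hu', hub⟩ := exists_mem_ne (by rw [card_erase_of_mem hb', hcard]; omega) b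
  obtain ⟨huw, hu⟩ := mem_erase.1 hu'
  obtain ⟨v, hv, hvu, huv, hu₂⟩ := partner u hu
  have hvw : v ≠ b' := by
    rintro rfl
    exact hub (hS.eq_of_apply_vee_eq_zero hu hb (hS.ne_zero hv hu hvu)
      (orth hu hv hvu huv) (hS.apply_vee_eq_zero_of_isSingletonSeries hv hb hbw hwb))
  have hvb : v ≠ b := by
    rintro rfl
    exact huw (hS.eq_of_apply_vee_eq_zero hu hb' (hS.ne_zero hv hu hvu)
      (orth hu hv hvu huv) (hS.apply_vee_eq_zero_of_isSingletonSeries hv hb' hb'b hbb'))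
  rcases (hw₂ u ⟨hu, hub⟩ v ⟨hv, hvb⟩ huw hvw).sameSer_or_sameSer
    (hS.indep b' hb' b hb hbw.symm) (hS.indep u hu v hv hvu.symm)
    (hb₂ u ⟨hu, huw⟩ v ⟨hv, hvw⟩ hub hvb)
    (hu₂ b' ⟨hb', hvw.symm⟩ b ⟨hb, hvb.symm⟩ huw.symm hub.symm) with h' | h'
  · exact hub (hwb u hu huw h')
  · exact hvw (huv b' hb' huw.symm h'.symm).symm

theorem level_adjacent_or_midpoint (hS : IsVeeSystem A c vee) {w x u₁ u₂ u₃ : D 2} {a₁ a₂ a₃ : ℤ}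
    (hA : ∀ β ∈ A, β = u₁ ∨ β = w ∨ β = u₂ ∨ β = u₃) (hu₁A : u₁ ∈ A) (hw : w ∈ A)
    (hu₂A : u₂ ∈ A) (hw₁ : w ≠ u₁) (h₂₁ : u₂ ≠ u₁) (hw₂ : w ≠ u₂)
    (hwx : LinearIndependent ℂ ![w, x])
    (hu₁ : u₁ = x - (a₁ : ℂ) • w ∨ u₁ = -(x - (a₁ : ℂ) • w))
    (hu₂ : u₂ = x - (a₂ : ℂ) • w ∨ u₂ = -(x - (a₂ : ℂ) • w))
    (hu₃ : u₃ = x - (a₃ : ℂ) • w ∨ u₃ = -(x - (a₃ : ℂ) • w)) :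
    (a₁ - a₂ = 1 ∨ a₂ - a₁ = 1) ∨ (a₁ - a₃ = 1 ∨ a₃ - a₁ = 1) ∨ a₂ = a₃ ∨
      a₂ + a₃ = 2 * a₁ := by
  have h := hS.exists_sameSer hA hu₁A hw hu₂A hw₁ h₂₁ hw₂
  rcases hu₁ with rfl | rfl <;> rcases hu₂ with rfl | rfl <;> rcases hu₃ with rfl | rfl <;>
    (try simp only [sameSer_neg_left, sameSer_neg_mid, sameSer_neg_right] at h) <;>
    exact h.imp (·.level_sub_eq_one hwx)
      (Or.imp (·.level_sub_eq_one hwx) (·.levels_eq_or_add_eq hwx))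

end IsVeeSystem

/-- The positive roots of `B₂` in the basis `f, g`. -/
def rootsB₂ {n : ℕ} (f g : D n) : Set (D n) := {f, g, f + g, f - g}

def EqUpToSigns {M : Type*} [Neg M] (A B : Set M) : Prop :=
  (∀ β ∈ A, β ∈ B ∨ -β ∈ B) ∧ ∀ ξ ∈ B, ξ ∈ A ∨ -ξ ∈ A

theorem EqUpToSigns.exists_signs {R M : Type*} [Ring R] [AddCommGroup M] [Module R M]
    {A B : Set M} (h : EqUpToSigns A B) (hB : ∀ ξ ∈ B, -ξ ∉ B) :
    ∃ s : M → R, (∀ β ∈ A, s β = 1 ∨ s β = -1) ∧ ∀ ξ, ξ ∈ B ↔ ∃ β ∈ A, ξ = s β • β := by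
  classical
  refine ⟨fun β => if β ∈ B then 1 else -1, fun β _ => by dsimp only; split_ifs <;> simp,
    fun ξ => ⟨fun hξ => ?_, ?_⟩⟩
  · rcases h.2 ξ hξ with hξA | hξA
    · exact ⟨ξ, hξA, by simp [hξ]⟩
    · exact ⟨-ξ, hξA, by simp [hB ξ hξ]⟩
  · rintro ⟨β, hβ, rfl⟩
    by_cases hβB : β ∈ B
    · simp [hβB]
    · simpa [hβB] using (h.1 β hβ).resolve_left hβB

theorem eqUpToSigns_rootsB₂_of_levels {n : ℕ} {A : Set (D n)} {w x u₁ u₂ u₃ : D n}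
    {a₁ a₂ a₃ k : ℤ} (hA : ∀ β, β ∈ A ↔ β = w ∨ β = u₁ ∨ β = u₂ ∨ β = u₃)
    (hu₁ : u₁ = x - (a₁ : ℂ) • w ∨ u₁ = -(x - (a₁ : ℂ) • w))
    (hu₂ : u₂ = x - (a₂ : ℂ) • w ∨ u₂ = -(x - (a₂ : ℂ) • w))
    (hu₃ : u₃ = x - (a₃ : ℂ) • w ∨ u₃ = -(x - (a₃ : ℂ) • w))
    (hk : ∀ a, (a = a₁ ∨ a = a₂ ∨ a = a₃) ↔ k - 1 ≤ a ∧ a ≤ k + 1) :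
    EqUpToSigns A (rootsB₂ w (x - (k : ℂ) • w)) := by
  have pm {u t : D n} {S : Set (D n)} (hu : u = t ∨ u = -t) :
      (t ∈ S ∨ -t ∈ S) ↔ (u ∈ S ∨ -u ∈ S) := by
    rcases hu with rfl | rfl
    · rfl
    · rw [neg_neg, or_comm]
  have hroot (a : ℤ) (ha : k - 1 ≤ a ∧ a ≤ k + 1) :
      x - (a : ℂ) • w ∈ rootsB₂ w (x - (k : ℂ) • w) ∨
        -(x - (a : ℂ) • w) ∈ rootsB₂ w (x - (k : ℂ) • w) := by
    obtain rfl | rfl | rfl : a = k - 1 ∨ a = k ∨ a = k + 1 := by omega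
    · exact Or.inl (Or.inr (Or.inr (Or.inl (by push_cast; module))))
    · exact Or.inl (Or.inr (Or.inl rfl))
    · exact Or.inr (Or.inr (Or.inr (Or.inr (by push_cast; module))))
  have hmem (a : ℤ) (ha : k - 1 ≤ a ∧ a ≤ k + 1) :
      x - (a : ℂ) • w ∈ A ∨ -(x - (a : ℂ) • w) ∈ A := by
    rcases (hk a).2 ha with rfl | rfl | rfl
    · exact (pm hu₁).2 (Or.inl ((hA u₁).2 (by simp)))
    · exact (pm hu₂).2 (Or.inl ((hA u₂).2 (by simp)))
    · exact (pm hu₃).2 (Or.inl ((hA u₃).2 (by simp)))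
  refine ⟨fun β hβ => ?_, fun ξ hξ => ?_⟩
  · rcases (hA β).1 hβ with rfl | rfl | rfl | rfl
    · exact Or.inl (Or.inl rfl)
    · exact (pm hu₁).1 (hroot a₁ ((hk a₁).1 (by simp)))
    · exact (pm hu₂).1 (hroot a₂ ((hk a₂).1 (by simp)))
    · exact (pm hu₃).1 (hroot a₃ ((hk a₃).1 (by simp)))
  · rcases hξ with rfl | rfl | rfl | rfl
    · exact Or.inl ((hA ξ).2 (Or.inl rfl))
    · exact hmem k (by omega)
    · exact (pm (by push_cast; left; module)).1 (hmem (k - 1) (by omega))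
    · exact (pm (by push_cast; right; module)).1 (hmem (k + 1) (by omega))

theorem neg_notMem_rootsB₂ {f g : D 2} (hfg : LinearIndependent ℂ ![f, g]) :
    ∀ ξ ∈ rootsB₂ f g, -ξ ∉ rootsB₂ f g := by
  obtain ⟨a, b, hfa, hga, hfb, hgb⟩ := hfg.exists_dual_pair
  intro ξ hξ h
  simp only [rootsB₂, Set.mem_insert_iff, Set.mem_singleton_iff] at hξ h
  rcases hξ with rfl | rfl | rfl | rfl <;> rcases h with h | h | h | h <;>
    have hab := congrArg (fun ξ : D 2 => (ξ a, ξ b)) h <;>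
    norm_num [hfa, hga, hfb, hgb] at hab

theorem exists_signs_of_eqUpToSigns_rootsB₂ {A : Finset (D 2)} {f g : D 2}
    (hfg : LinearIndependent ℂ ![f, g]) (h : EqUpToSigns ↑A (rootsB₂ f g)) :
    ∃ s : D 2 → ℂ, (∀ β ∈ A, s β = 1 ∨ s β = -1) ∧
      ∃ A' : Finset (D 2), (∀ ξ, ξ ∈ A' ↔ ∃ β ∈ A, ξ = s β • β) ∧
        (∃ α ∈ A', ∃ Γ : Finset (D 2), IsSeries A' α Γ ∧ ∀ ξ ∈ A', ξ ≠ α → ξ ∈ Γ) ∧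
        ∃ f g : D 2, LinearIndependent ℂ ![f, g] ∧
          ∀ ξ, ξ ∈ A' ↔ (ξ = f ∨ ξ = g ∨ ξ = f + g ∨ ξ = f - g) := by
  classical
  obtain ⟨s, hs, hB⟩ := h.exists_signs (R := ℂ) (neg_notMem_rootsB₂ hfg)
  simp only [mem_coe] at hs hB
  obtain ⟨a, b, hfa, hga, hfb, hgb⟩ := hfg.exists_dual_pair
  have h₁ : SameSer f g (f + g) := ⟨-1, Or.inl (by module)⟩
  have h₂ : SameSer f g (f - g) := ⟨1, Or.inr (by module)⟩
  have h₃ : SameSer f (f + g) (f - g) := ⟨2, Or.inr (by module)⟩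
  refine ⟨s, hs, {f, g, f + g, f - g}, fun ξ => ?_, ⟨f, by simp, {g, f + g, f - g},
    ⟨?_, ?_, ?_, ?_⟩, ?_⟩, f, g, hfg, fun ξ => by simp⟩
  · rw [← hB]; simp [rootsB₂]
  · intro ξ; simp only [mem_insert, mem_singleton]; tauto
  · rintro ξ hξ ⟨t, rfl⟩
    simp only [mem_insert, mem_singleton] at hξ
    rcases hξ with h | h | h <;> have hb' := LinearMap.congr_fun h b <;>
      simp [hfb, hgb] at hb'
  · intro ξ hξ η hη
    simp only [mem_insert, mem_singleton] at hξ hη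
    rcases hξ with rfl | rfl | rfl <;> rcases hη with rfl | rfl | rfl <;>
      first | exact SameSer.refl _ _ | assumption | exact SameSer.symm ‹_›
  · intro ξ hξ hpar _
    simp only [mem_insert, mem_singleton] at hξ ⊢
    rcases hξ with rfl | hξ
    · exact absurd ⟨1, (one_smul _ _).symm⟩ hpar
    · exact hξ
  · intro ξ hξ hξf
    simp only [mem_insert, mem_singleton] at hξ ⊢
    tauto

theorem IsVeeSystem.exists_eqUpToSigns_rootsB₂ {A : Finset (D 2)} {c : D 2 → ℂ}
    {vee : D 2 → V 2} {w : D 2} (hS : IsVeeSystem A c vee) (hcard : A.card = 4) (hw : w ∈ A)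
    (hone : IsOneSeries A w) :
    ∃ g, LinearIndependent ℂ ![w, g] ∧ EqUpToSigns ↑A (rootsB₂ w g) := by
  classical
  obtain ⟨x, y, z, hxy, hxz, hyz, hAw⟩ :=
    card_eq_three.1 (by rw [card_erase_of_mem hw, hcard] : (A.erase w).card = 3)
  have hA (β : D 2) : β ∈ A ↔ β = w ∨ β = x ∨ β = y ∨ β = z := by
    rw [← insert_erase hw, hAw]; simp
  obtain ⟨hxw, hx⟩ := mem_erase.1 (by simp [hAw] : x ∈ A.erase w)
  obtain ⟨hyw, hy⟩ := mem_erase.1 (by simp [hAw] : y ∈ A.erase w)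
  obtain ⟨hzw, hz⟩ := mem_erase.1 (by simp [hAw] : z ∈ A.erase w)
  have hwx := hS.indep w hw x hx hxw.symm
  have hx' : x = x - ((0 : ℤ) : ℂ) • w ∨ x = -(x - ((0 : ℤ) : ℂ) • w) := Or.inl (by simp)
  obtain ⟨p, hy'⟩ := (hone x hx y hy hxw hyw).exists_eq
  obtain ⟨q, hz'⟩ := (hone x hx z hz hxw hzw).exists_eq
  have c₁ := hS.level_adjacent_or_midpoint
    (fun β hβ => by rcases (hA β).1 hβ with rfl | rfl | rfl | rfl <;> simp)
    hx hw hy hxw.symm hxy.symm hyw.symm hwx hx' hy' hz'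
  have c₂ := hS.level_adjacent_or_midpoint
    (fun β hβ => by rcases (hA β).1 hβ with rfl | rfl | rfl | rfl <;> simp)
    hy hw hx hyw.symm hxy hxw.symm hwx hy' hx' hz'
  have c₃ := hS.level_adjacent_or_midpoint
    (fun β hβ => by rcases (hA β).1 hβ with rfl | rfl | rfl | rfl <;> simp)
    hz hw hx hzw.symm hxz hxw.symm hwx hz' hx' hy'
  have d₁ := level_ne (hS.indep x hx y hy hxy) hx' hy'
  have d₂ := level_ne (hS.indep x hx z hz hxz) hx' hz'
  have d₃ := level_ne (hS.indep y hy z hz hyz) hy' hz'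
  -- the levels `0, p, q` are consecutive, so their mean is the middle one
  refine ⟨x - (((p + q) / 3 : ℤ) : ℂ) • w, ?_,
    eqUpToSigns_rootsB₂_of_levels (fun β => mem_coe.trans (hA β)) hx' hy' hz' fun a => by omega⟩
  rwa [sub_eq_add_neg, add_comm, ← neg_smul, LinearIndependent.pair_add_smul_right_iff]

theorem four_covectors_structure_general (A : Finset (D 2)) (hcard : A.card = 4)
    (hpnc : ∀ α ∈ A, ∀ β ∈ A, α ≠ β → LinearIndependent ℂ ![α, β])
    (c : D 2 → ℂ) (hc : ∀ α ∈ A, c α ≠ 0)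
    (vee : D 2 → V 2) (hvee : ∀ ξ : D 2, ∀ v : V 2, Gform A c (vee ξ) v = ξ v)
    (hser : SeriesCond A c (fun ξ η => ξ (vee η))) :
    ∃ s : D 2 → ℂ, (∀ β ∈ A, s β = 1 ∨ s β = -1) ∧
      ∃ A' : Finset (D 2), (∀ ξ, ξ ∈ A' ↔ ∃ β ∈ A, ξ = s β • β) ∧
        (∃ α ∈ A', ∃ Γ : Finset (D 2), IsSeries A' α Γ ∧ ∀ ξ ∈ A', ξ ≠ α → ξ ∈ Γ) ∧
        ∃ f g : D 2, LinearIndependent ℂ ![f, g] ∧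
          ∀ ξ, ξ ∈ A' ↔ (ξ = f ∨ ξ = g ∨ ξ = f + g ∨ ξ = f - g) := by
  have hS : IsVeeSystem A c vee := ⟨hpnc, hc, hvee, hser⟩
  obtain ⟨w, hw, hone⟩ := hS.exists_isOneSeries hcard
  obtain ⟨g, hwg, hsigns⟩ := hS.exists_eqUpToSigns_rootsB₂ hcard hw hone
  exact exists_signs_of_eqUpToSigns_rootsB₂ hwg hsigns

/-- geometric core of Proposition 3: an irreducible trigonometric
∨-system of four pairwise non-collinear covectors has, after negating some covectors,
one covector whose single series contains the other three, and in a suitable basis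
the covectors are `e¹, e², e¹+e², e¹−e²`. -/
theorem four_covectors_structure (A : Finset (D 2)) (hcard : A.card = 4)
    (hpnc : ∀ α ∈ A, ∀ β ∈ A, α ≠ β → LinearIndependent ℂ ![α, β])
    (c : D 2 → ℂ) (hc : ∀ α ∈ A, c α ≠ 0)
    (hlat : InLattice A)
    (hnd : NonDeg (Gform A c))
    (vee : D 2 → V 2) (hvee : ∀ ξ : D 2, ∀ v : V 2, Gform A c (vee ξ) v = ξ v)
    (hser : SeriesCond A c (fun ξ η => ξ (vee η)))
    (hirr : Irred A) :
    ∃ s : D 2 → ℂ, (∀ β ∈ A, s β = 1 ∨ s β = -1) ∧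
      ∃ A' : Finset (D 2), (∀ ξ, ξ ∈ A' ↔ ∃ β ∈ A, ξ = s β • β) ∧
        (∃ α ∈ A', ∃ Γ : Finset (D 2), IsSeries A' α Γ ∧ ∀ ξ ∈ A', ξ ≠ α → ξ ∈ Γ) ∧
        ∃ f g : D 2, LinearIndependent ℂ ![f, g] ∧
          ∀ ξ, ξ ∈ A' ↔ (ξ = f ∨ ξ = g ∨ ξ = f + g ∨ ξ = f - g) :=
  four_covectors_structure_general A hcard hpnc c hc vee hvee hser
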